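/- Let φ be a monotonic nonessential enhancement of site percolation on the square lattice ℤ² and fix s ∈ [0,1]. Assume there is a continuous function F : (0,∞) → ℝ such that for all b,h > 0 the crossing probabilities of independent critical site percolation satisfy lim_{δ→0} φ_δ(b,h) = F(b/h). Then for all b,h > 0 the crossing probabilities of the enhanced process satisfy lim_{δ→0} φ̂_δ(b,h) = F(b/h). -/

import Mathlib

open MeasureTheory Filter Set Topology
open scoped ENNReal

namespace PercEnh

/-- Sites of the lattice (vertex set `ℤ²`). -/
abbrev Site : Type := ℤ × ℤ

/-- A configuration: the set of open sites. -/
abbrev Config : Type := Set Site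

/-- Square-lattice (`ℤ²`-) adjacency: `‖x − y‖₁ = 1`. -/
def adjZ2 (x y : Site) : Prop := |x.1 - y.1| + |x.2 - y.2| = 1

/-- Matching (star) adjacency: `x ≠ y` and `‖x − y‖_∞ = 1`. -/
def adjStar (x y : Site) : Prop := x ≠ y ∧ max |x.1 - y.1| |x.2 - y.2| = 1

/-- Euclidean norm of a site. -/
noncomputable def siteNorm (x : Site) : ℝ := Real.sqrt ((x.1 : ℝ) ^ 2 + (x.2 : ℝ) ^ 2)

/-- Sites in the closed Euclidean ball of radius `r` centred at the origin. -/
def siteBall (r : ℝ) : Set Site := {x | siteNorm x ≤ r}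

/-- The shifted configuration `τ_x ω = {y − x : y ∈ ω}`. -/
def shiftConfig (x : Site) (ω : Config) : Config := {y | y + x ∈ ω}

/-- An enhancement function of (finite) range `R₀`: takes values in subsets of
`𝔹₀ = ℤ² ∩ B(R₀)` and depends only on the restriction of the configuration to `𝔹₀`. -/
def IsEnhancement (R₀ : ℝ) (φ : Config → Config) : Prop :=
  0 ≤ R₀ ∧ (∀ ω, φ ω ⊆ siteBall R₀) ∧
    ∀ ω ω' : Config, ω ∩ siteBall R₀ = ω' ∩ siteBall R₀ → φ ω = φ ω'

/-- A monotonic enhancement function. -/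
def Monotonic (φ : Config → Config) : Prop := ∀ ω ω' : Config, ω ⊆ ω' → φ ω ⊆ φ ω'

/-- The translate `φ_x(ω) = x + φ₀(τ_x ω)`. -/
def enhAt (φ : Config → Config) (x : Site) (ω : Config) : Config :=
  (fun z => z + x) '' φ (shiftConfig x ω)

/-- The enhanced configuration `ω̂(ω, α) = ω ∪ ⋃_{x : α(x)=1} φ_x(ω)`. -/
def enhanced (φ : Config → Config) (ω : Config) (α : Site → Bool) : Config :=
  ω ∪ {y | ∃ x, α x = true ∧ y ∈ enhAt φ x ω}

/-- The fully (deterministically, with `s = 1`) enhanced configuration `ω̃`. -/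
def fullyEnhanced (φ : Config → Config) (ω : Config) : Config :=
  ω ∪ {y | ∃ x, y ∈ enhAt φ x ω}

/-- `ω` contains a doubly-infinite self-repelling path (w.r.t. adjacency `adj`):
a two-sided sequence of distinct sites of `ω` in which exactly the consecutive
pairs are adjacent. -/
def HasDISRPath (adj : Site → Site → Prop) (ω : Config) : Prop :=
  ∃ γ : ℤ → Site, Function.Injective γ ∧ (∀ i, γ i ∈ ω) ∧
    ∀ i j : ℤ, adj (γ i) (γ j) ↔ (j = i + 1 ∨ i = j + 1)

/-- The enhancement is essential: some configuration without a doubly-infinite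
self-repelling path acquires one upon enhancement at the origin. -/
def Essential (adj : Site → Site → Prop) (φ : Config → Config) : Prop :=
  ∃ ω : Config, ¬ HasDISRPath adj ω ∧ HasDISRPath adj (ω ∪ φ ω)

/-- A (finite, nonempty) path w.r.t. adjacency `adj`: distinct sites,
consecutive ones adjacent. -/
def IsPathOn (adj : Site → Site → Prop) (l : List Site) : Prop :=
  l ≠ [] ∧ l.Nodup ∧ l.Chain' adj

/-- `x` and `y` are joined by a path of sites of `ω`. -/
def ConnectedIn (adj : Site → Site → Prop) (ω : Config) (x y : Site) : Prop :=
  ∃ l : List Site, IsPathOn adj l ∧ (∀ z ∈ l, z ∈ ω) ∧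
    l.head? = some x ∧ l.getLast? = some y

/-- `x` belongs to an infinite open cluster of `ω`. -/
def InInfiniteCluster (adj : Site → Site → Prop) (ω : Config) (x : Site) : Prop :=
  {y | ConnectedIn adj ω x y}.Infinite

/-- `ω` contains an infinite open cluster. -/
def HasInfiniteCluster (adj : Site → Site → Prop) (ω : Config) : Prop :=
  ∃ x, InInfiniteCluster adj ω x

/-- The configuration corresponding to `η : Site → Bool`. -/
def toConfig (η : Site → Bool) : Config := {x | η x = true}

/-- A cylinder event. -/
def cylinder (F : Finset Site) (b : Site → Bool) : Set (Site → Bool) :=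
  {η | ∀ x ∈ F, η x = b x}

/-- `μ` is the Bernoulli product measure with density `p` of open sites. -/
def IsBernoulli (p : ℝ) (μ : Measure (Site → Bool)) : Prop :=
  IsProbabilityMeasure μ ∧
    ∀ (F : Finset Site) (b : Site → Bool),
      μ (cylinder F b) = ∏ x ∈ F, ENNReal.ofReal (if b x then p else 1 - p)

/-- The percolation probability `θ`: the probability that the origin lies in an
infinite open cluster. -/
noncomputable def theta (adj : Site → Site → Prop) (μ : Measure (Site → Bool)) : ℝ :=
  (μ {η | InInfiniteCluster adj (toConfig η) 0}).toReal

/-- The percolation probability of the enhanced process (`μ` the law of the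
configuration, `ν` the law of the activation variables). -/
noncomputable def thetaEnh (adj : Site → Site → Prop) (φ : Config → Config)
    (μ ν : Measure (Site → Bool)) : ℝ :=
  ((μ.prod ν) {ηα | InInfiniteCluster adj (enhanced φ (toConfig ηα.1) ηα.2) 0}).toReal

/-- The critical point `p_c = sup {p ∈ [0,1] : θ(p) = 0}` for the family `P`. -/
noncomputable def pcOf (adj : Site → Site → Prop) (P : ℝ → Measure (Site → Bool)) : ℝ :=
  sSup {p | p ∈ Icc (0:ℝ) 1 ∧ theta adj (P p) = 0}

/-- The connectivity function `τ_p(x)`. -/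
noncomputable def tau (adj : Site → Site → Prop) (μ : Measure (Site → Bool)) (x : Site) : ℝ :=
  (μ {η | ConnectedIn adj (toConfig η) 0 x}).toReal

/-- The connectivity function `τ_{p,s}(x)` of the enhanced process. -/
noncomputable def tauEnh (adj : Site → Site → Prop) (φ : Config → Config)
    (μ ν : Measure (Site → Bool)) (x : Site) : ℝ :=
  ((μ.prod ν) {ηα | ConnectedIn adj (enhanced φ (toConfig ηα.1) ηα.2) 0 x}).toReal

/-- The mean cluster size `χ(p) = E_p‖C‖ = ∑_x τ_p(x)`. -/
noncomputable def chi (adj : Site → Site → Prop) (μ : Measure (Site → Bool)) : ℝ≥0∞ :=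
  ∑' x : Site, μ {η | ConnectedIn adj (toConfig η) 0 x}

/-- The mean cluster size of the enhanced process. -/
noncomputable def chiEnh (adj : Site → Site → Prop) (φ : Config → Config)
    (μ ν : Measure (Site → Bool)) : ℝ≥0∞ :=
  ∑' x : Site, (μ.prod ν) {ηα | ConnectedIn adj (enhanced φ (toConfig ηα.1) ηα.2) 0 x}


/-- The open rectangle `R(b,h) = (−b/2, b/2) × (−h/2, h/2)`. -/
def rectR (b h : ℝ) : Set (ℝ × ℝ) :=
  {w | -(b / 2) < w.1 ∧ w.1 < b / 2 ∧ -(h / 2) < w.2 ∧ w.2 < h / 2}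

/-- The top side `[−b/2, b/2] × {h/2}`. -/
def topSide (b h : ℝ) : Set (ℝ × ℝ) := {w | |w.1| ≤ b / 2 ∧ w.2 = h / 2}

/-- The bottom side `[−b/2, b/2] × {−h/2}`. -/
def botSide (b h : ℝ) : Set (ℝ × ℝ) := {w | |w.1| ≤ b / 2 ∧ w.2 = -(h / 2)}

/-- The line segment from `u` to `v` in `ℝ²`. -/
def seg (u v : ℝ × ℝ) : Set (ℝ × ℝ) :=
  {w | ∃ t : ℝ, 0 ≤ t ∧ t ≤ 1 ∧ w = (1 - t) • u + t • v}

/-- There is an open vertical crossing of `R(b,h)` in the configuration `ω`, with the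
lattice embedded in the plane via `emb`: an open path `x₀, x₁, …, x_m, x_{m+1}` with
the (embedded) intermediate sites in `R(b,h)`, the segment from `x₀` to `x₁` touching
the top side and the segment from `x_m` to `x_{m+1}` touching the bottom side. -/
def VertCrossing (adj : Site → Site → Prop) (emb : Site → ℝ × ℝ) (ω : Config)
    (b h : ℝ) : Prop :=
  ∃ (n : ℕ) (x : ℕ → Site), 1 ≤ n ∧
    (∀ i ≤ n, adj (x i) (x (i + 1))) ∧
    (∀ i ≤ n + 1, ∀ j ≤ n + 1, x i = x j → i = j) ∧
    (∀ i ≤ n + 1, x i ∈ ω) ∧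
    (∀ i, 1 ≤ i → i ≤ n → emb (x i) ∈ rectR b h) ∧
    (seg (emb (x 0)) (emb (x 1)) ∩ topSide b h).Nonempty ∧
    (seg (emb (x n)) (emb (x (n + 1))) ∩ botSide b h).Nonempty

/-- Crossing probability `φ_δ(b,h)` (with `emb` the mesh-`δ` embedding). -/
noncomputable def crossProb (adj : Site → Site → Prop) (emb : Site → ℝ × ℝ)
    (μ : Measure (Site → Bool)) (b h : ℝ) : ℝ :=
  (μ {η | VertCrossing adj emb (toConfig η) b h}).toReal

/-- Crossing probability `φ̂_δ(b,h)` of the enhanced process. -/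
noncomputable def crossProbEnh (adj : Site → Site → Prop) (φ : Config → Config)
    (emb : Site → ℝ × ℝ) (μ ν : Measure (Site → Bool)) (b h : ℝ) : ℝ :=
  ((μ.prod ν) {ηα | VertCrossing adj emb (enhanced φ (toConfig ηα.1) ηα.2) b h}).toReal

/-- The embedding of the square lattice `ℤ²` at mesh `δ`. -/
noncomputable def embedSq (δ : ℝ) (x : Site) : ℝ × ℝ := (δ * (x.1 : ℝ), δ * (x.2 : ℝ))

/-!
Enhancement only adds open sites, so `φ̂_δ(b,h) ≥ φ_δ(b,h)`. Conversely, for `δ` small compared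
with `ε`, a crossing of `R(b,h)` in the enhanced configuration yields a crossing of the wider and
shorter rectangle `R(b+ε,h−ε)` in `ω` itself. Only finitely many enhancements meet the crossing,
and they are removed one at a time. To remove the one at `x`, take a chordless walk from a highest
to a lowest site of the crossing and extend it by the vertical rays above and below: this is a
doubly-infinite self-repelling path in `Ω ∪ φ_x(Ω)`, where `Ω` consists of the rays, the sites of
the walk that do not need the enhancement at `x`, and the open sites near `x`. Non-essentiality
gives such a path in `Ω`. Its tails lie in the rays but not both in one ray, so it crosses from
the upper ray to the lower one through sites of `ω` that stay in a strip only `R₀` wider.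
Finally `φ_δ(b+ε,h−ε) → F((b+ε)/(h−ε))`, which is close to `F(b/h)` by continuity, and the two
bounds squeeze `φ̂_δ(b,h)`.
-/

section Walks

variable {α : Type*} {r : α → α → Prop}

variable (r) in
def IsWalk (q : ℕ → α) (m : ℕ) : Prop := ∀ i < m, r (q i) (q (i + 1))

lemma IsWalk.comp_add {q : ℕ → α} {m : ℕ} (hq : IsWalk r q m) {a k : ℕ} (hak : a + k ≤ m) :
    IsWalk r (fun n => q (a + n)) k := fun i hi => by
  simpa only [Nat.add_assoc] using hq (a + i) (by omega)

lemma IsWalk.comp_sub [Std.Symm r] {q : ℕ → α} {m : ℕ} (hq : IsWalk r q m) {a k : ℕ}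
    (hka : k ≤ a) (ham : a ≤ m) : IsWalk r (fun n => q (a - n)) k := fun i hi => by
  have h := hq (a - (i + 1)) (by omega)
  rw [show a - (i + 1) + 1 = a - i by omega] at h
  exact symm_of r h

lemma IsWalk.exists_between [Std.Symm r] {q : ℕ → α} {m : ℕ} (hq : IsWalk r q m)
    {i j : ℕ} (hi : i ≤ m) (hj : j ≤ m) :
    ∃ p k, IsWalk r p k ∧ p 0 = q i ∧ p k = q j ∧ ∀ n ≤ k, ∃ l ≤ m, p n = q l := by
  rcases le_total i j with hij | hji
  · exact ⟨fun n => q (i + n), j - i, hq.comp_add (by omega), rfl,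
      by simp only [Nat.add_sub_cancel' hij], fun n hn => ⟨i + n, by omega, rfl⟩⟩
  · exact ⟨fun n => q (i - n), i - j, hq.comp_sub (by omega) hi, rfl,
      by simp only [Nat.sub_sub_self hji], fun n hn => ⟨i - n, by omega, rfl⟩⟩

/-- Cutting out the loop `q (i+1), …, q (j-1)` along the chord `r (q i) (q j)`. -/
lemma IsWalk.exists_shortcut {q : ℕ → α} {m : ℕ} (hq : IsWalk r q m) {i j : ℕ} (hij : i < j)
    (hjm : j ≤ m) (hr : r (q i) (q j)) :
    ∃ p, IsWalk r p (m - (j - i - 1)) ∧ p 0 = q 0 ∧ p (m - (j - i - 1)) = q m ∧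
      ∀ n ≤ m - (j - i - 1), ∃ l ≤ m, p n = q l := by
  refine ⟨fun t => if t ≤ i then q t else q (t + (j - i - 1)), fun t ht => ?_, by simp,
    by simp only [if_neg (show ¬ m - (j - i - 1) ≤ i by omega)]; congr 1; omega,
    fun t ht => ?_⟩ <;> dsimp only
  · rcases lt_trichotomy t i with h | rfl | h
    · rw [if_pos h.le, if_pos (show t + 1 ≤ i by omega)]
      exact hq t (by omega)
    · rw [if_pos le_rfl, if_neg (by omega), show t + 1 + (j - t - 1) = j by omega]
      exact hr
    · rw [if_neg (show ¬ t ≤ i by omega), if_neg (show ¬ t + 1 ≤ i by omega),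
        show t + 1 + (j - i - 1) = t + (j - i - 1) + 1 by omega]
      exact hq _ (by omega)
  · split_ifs
    · exact ⟨t, by omega, rfl⟩
    · exact ⟨t + (j - i - 1), by omega, rfl⟩

/-- A shortest walk between two points is injective and has no chords. -/
lemma IsWalk.exists_injOn_chordless {q : ℕ → α} {m : ℕ} (hq : IsWalk r q m) :
    ∃ p k, IsWalk r p k ∧ p 0 = q 0 ∧ p k = q m ∧ (∀ n ≤ k, ∃ l ≤ m, p n = q l) ∧
      InjOn p (Iic k) ∧ ∀ i j, i + 2 ≤ j → j ≤ k → ¬ r (p i) (p j) := by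
  classical
  have hex : ∃ k, ∃ p, IsWalk r p k ∧ p 0 = q 0 ∧ p k = q m ∧ ∀ n ≤ k, ∃ l ≤ m, p n = q l :=
    ⟨m, q, hq, rfl, rfl, fun n hn => ⟨n, hn, rfl⟩⟩
  obtain ⟨p, hp, hp0, hpk, hpq⟩ := Nat.find_spec hex
  set k := Nat.find hex
  have hshort : ∀ i j, i < j → j ≤ k → r (p i) (p j) → j = i + 1 := by
    intro i j hij hjk hr
    by_contra hne
    obtain ⟨p', hp', hp'0, hp'k, hp'p⟩ := hp.exists_shortcut hij hjk hr
    refine Nat.find_min hex (show k - (j - i - 1) < k by omega) ⟨p', hp', hp'0 ▸ hp0,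
      hp'k ▸ hpk, fun n hn => ?_⟩
    obtain ⟨l, hl, hl'⟩ := hp'p n hn
    exact hl' ▸ hpq l hl
  refine ⟨p, k, hp, hp0, hpk, hpq, fun i hi j hj hpij => ?_,
    fun i j hij hjk hr => by have := hshort i j (by omega) hjk hr; omega⟩
  by_contra hne
  wlog hlt : i < j generalizing i j
  · exact this j hj i hi hpij.symm (Ne.symm hne) (by omega)
  rcases (show j ≤ k from hj).lt_or_eq with hjk | rfl
  · have := hshort i (j + 1) (by omega) hjk (hpij ▸ hp j hjk)
    omega
  · exact Nat.find_min hex hlt ⟨p, fun n hn => hp n (by omega), hp0, hpij.trans hpk,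
      fun n hn => hpq n (by omega)⟩

end Walks

/-- The last visit to `P` before the first visit to `Q`. -/
lemma exists_crossing_interval {P Q : ℕ → Prop} {m : ℕ} (h0 : P 0) (hm : Q m)
    (hPQ : ∀ n, P n → ¬ Q n) :
    ∃ a b, a < b ∧ b ≤ m ∧ P a ∧ Q b ∧ ∀ n, a < n → n < b → ¬ P n ∧ ¬ Q n := by
  classical
  have hQ : ∃ n, Q n := ⟨m, hm⟩
  set b := Nat.find hQ
  have ha : P (Nat.findGreatest P b) := Nat.findGreatest_spec (Nat.zero_le b) h0
  have hab : Nat.findGreatest P b ≠ b := fun h => hPQ b (h ▸ ha) (Nat.find_spec hQ)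
  refine ⟨Nat.findGreatest P b, b, (Nat.findGreatest_le b).lt_of_ne hab, Nat.find_min' hQ hm,
    ha, Nat.find_spec hQ, fun n han hnb => ⟨Nat.findGreatest_is_greatest han hnb.le,
    Nat.find_min hQ hnb⟩⟩

lemma exists_eq_of_injective_of_bddBelow {g : ℕ → ℤ} (hg : Function.Injective g)
    (hstep : ∀ n, |g (n + 1) - g n| ≤ 1) (hbdd : BddBelow (range g)) {V : ℤ} (hV : g 0 ≤ V) :
    ∃ n, g n = V := by
  classical
  have hex : ∃ n, V ≤ g n := by
    by_contra! h
    exact (Set.infinite_range_of_injective hg) (hbdd.finite_of_bddAbove ⟨V, by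
      rintro _ ⟨n, rfl⟩; exact (h n).le⟩)
  obtain ⟨n, hn, hmin⟩ : ∃ n, V ≤ g n ∧ ∀ k < n, g k < V :=
    ⟨Nat.find hex, Nat.find_spec hex, fun k hk => not_le.mp (Nat.find_min hex hk)⟩
  rcases n with _ | n
  · exact ⟨0, le_antisymm hV hn⟩
  · have := abs_le.mp (hstep n)
    have := hmin n n.lt_succ_self
    exact ⟨n + 1, by omega⟩

/-! ### Self-repelling paths on the square lattice -/

lemma adjZ2_iff {x y : Site} : adjZ2 x y ↔
    (x.2 = y.2 ∧ (x.1 = y.1 + 1 ∨ y.1 = x.1 + 1)) ∨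
    (x.1 = y.1 ∧ (x.2 = y.2 + 1 ∨ y.2 = x.2 + 1)) := by
  rw [adjZ2, Int.abs_eq_natAbs, Int.abs_eq_natAbs]
  omega

instance : Std.Symm adjZ2 := ⟨fun _ _ h => by rw [adjZ2_iff] at h ⊢; omega⟩

lemma abs_snd_sub_le_one_of_adjZ2 {x y : Site} (h : adjZ2 x y) : |x.2 - y.2| ≤ 1 := by
  rw [adjZ2_iff] at h; rw [abs_le]; omega

lemma abs_fst_sub_le_one_of_adjZ2 {x y : Site} (h : adjZ2 x y) : |(x.1 : ℝ) - y.1| ≤ 1 := by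
  rw [adjZ2_iff] at h
  rw [abs_le]; constructor <;> norm_cast <;> omega

lemma adjZ2_sub_right {x y z : Site} : adjZ2 (x - z) (y - z) ↔ adjZ2 x y := by
  simp [adjZ2]

lemma abs_fst_le_of_mem_siteBall {z : Site} {r : ℝ} (hz : z ∈ siteBall r) : |(z.1 : ℝ)| ≤ r :=
  (Real.sqrt_sq_eq_abs _).symm.trans_le <|
    (Real.sqrt_le_sqrt (le_add_of_nonneg_right (sq_nonneg _))).trans hz

lemma abs_snd_le_of_mem_siteBall {z : Site} {r : ℝ} (hz : z ∈ siteBall r) : |(z.2 : ℝ)| ≤ r :=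
  (Real.sqrt_sq_eq_abs _).symm.trans_le <|
    (Real.sqrt_le_sqrt (le_add_of_nonneg_left (sq_nonneg _))).trans hz

lemma abs_fst_sub_le_of_sub_mem_siteBall {z x : Site} {r : ℝ} (h : z - x ∈ siteBall r) :
    |(z.1 : ℝ) - x.1| ≤ r := by
  simpa using abs_fst_le_of_mem_siteBall h

lemma finite_siteBall (r : ℝ) : (siteBall r).Finite := by
  have hS : {n : ℤ | |(n : ℝ)| ≤ r}.Finite := by
    convert (isCompact_closedBall (0 : ℤ) r).finite_of_discrete using 1
    ext n; simp [Int.norm_eq_abs]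
  exact (hS.prod hS).subset fun z hz =>
    ⟨abs_fst_le_of_mem_siteBall hz, abs_snd_le_of_mem_siteBall hz⟩

lemma HasDISRPath.mono {adj : Site → Site → Prop} {W W' : Config} (h : HasDISRPath adj W)
    (hW : W ⊆ W') : HasDISRPath adj W' :=
  let ⟨γ, hinj, hmem, hiff⟩ := h
  ⟨γ, hinj, fun i => hW (hmem i), hiff⟩

lemma hasDISRPath_of_far {W : Config} {γ : ℤ → Site} (hmem : ∀ i, γ i ∈ W)
    (hstep : ∀ i, adjZ2 (γ i) (γ (i + 1)))
    (hfar : ∀ i j, i + 2 ≤ j → γ i ≠ γ j ∧ ¬ adjZ2 (γ i) (γ j)) : HasDISRPath adjZ2 W := by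
  have hne : ∀ i j, i < j → γ i ≠ γ j := fun i j hij h => by
    rcases (show i + 1 ≤ j by omega).eq_or_lt with rfl | hlt
    · have := hstep i; rw [h, adjZ2_iff] at this; omega
    · exact (hfar i j (by omega)).1 h
  refine ⟨γ, fun i j h => ?_, hmem, fun i j => ⟨fun hadj => ?_, ?_⟩⟩
  · by_contra hij
    rcases lt_or_gt_of_ne hij with hlt | hlt
    exacts [hne i j hlt h, hne j i hlt h.symm]
  · by_contra hij
    rcases lt_or_gt_of_ne (show i ≠ j by rintro rfl; rw [adjZ2_iff] at hadj; omega) with h | h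
    · exact (hfar i j (by omega)).2 hadj
    · exact (hfar j i (by omega)).2 (symm_of adjZ2 hadj)
  · rintro (rfl | rfl)
    exacts [hstep i, symm_of adjZ2 (hstep j)]

lemma HasDISRPath.shift {W : Config} (h : HasDISRPath adjZ2 W) (x : Site) :
    HasDISRPath adjZ2 (shiftConfig x W) :=
  let ⟨γ, hinj, hmem, hiff⟩ := h
  ⟨fun i => γ i - x, fun i j hij => hinj (sub_left_injective hij),
    fun i => by simpa [PercEnh.shiftConfig] using hmem i,
    fun i j => adjZ2_sub_right.trans (hiff i j)⟩

lemma shiftConfig_enhAt (φ : Config → Config) (x : Site) (Ω : Config) :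
    shiftConfig x (Ω ∪ enhAt φ x Ω) = shiftConfig x Ω ∪ φ (shiftConfig x Ω) := by
  ext y; simp [shiftConfig, enhAt]

/-- Non-essentiality is stated at the origin; translation invariance moves it to `x`. -/
lemma HasDISRPath.of_enhAt {φ : Config → Config} (hness : ¬ Essential adjZ2 φ) {Ω : Config}
    {x : Site} (h : HasDISRPath adjZ2 (Ω ∪ enhAt φ x Ω)) : HasDISRPath adjZ2 Ω := by
  have h' := h.shift x
  rw [shiftConfig_enhAt] at h'
  have hΩ : HasDISRPath adjZ2 (shiftConfig x Ω) := by
    by_contra hno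
    exact hness ⟨_, hno, h'⟩
  simpa [shiftConfig] using hΩ.shift (-x)

def upRay (u : Site) : Set Site := {w | w.1 = u.1 ∧ u.2 < w.2}

def downRay (v : Site) : Set Site := {w | w.1 = v.1 ∧ w.2 < v.2}

def rayExtension (p : ℕ → Site) (k : ℕ) (i : ℤ) : Site :=
  if i < 0 then ((p 0).1, (p 0).2 - i)
  else if i ≤ k then p i.toNat else ((p k).1, (p k).2 + k - i)

lemma rayExtension_cases (p : ℕ → Site) (k : ℕ) (i : ℤ) :
    (i < 0 ∧ rayExtension p k i = ((p 0).1, (p 0).2 - i)) ∨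
      (0 ≤ i ∧ i ≤ k ∧ rayExtension p k i = p i.toNat) ∨
      (k < i ∧ rayExtension p k i = ((p k).1, (p k).2 + k - i)) := by
  by_cases h0 : i < 0
  · exact Or.inl ⟨h0, if_pos h0⟩
  by_cases hk : i ≤ k
  · exact Or.inr (Or.inl ⟨by omega, hk, by simp only [rayExtension, if_neg h0, if_pos hk]⟩)
  · exact Or.inr (Or.inr ⟨by omega, by simp only [rayExtension, if_neg h0, if_neg hk]⟩)

/-- The height bounds keep the rays away from the walk, except at its endpoints. -/
lemma hasDISRPath_upRay_union_downRay {p : ℕ → Site} {k : ℕ} (hp : IsWalk adjZ2 p k)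
    (hinj : InjOn p (Iic k)) (hsr : ∀ i j, i + 2 ≤ j → j ≤ k → ¬ adjZ2 (p i) (p j))
    (hheight : ∀ i ≤ k, (p k).2 ≤ (p i).2 ∧ (p i).2 ≤ (p 0).2) :
    HasDISRPath adjZ2 (upRay (p 0) ∪ p '' Iic k ∪ downRay (p k)) := by
  have hγ := rayExtension_cases p k
  have hpt : ∀ j ≤ k, (p k).2 ≤ (p j).2 ∧ (p j).2 ≤ (p 0).2 ∧
      ((p j).1 = (p 0).1 → (p j).2 = (p 0).2 → j = 0) ∧
      ((p j).1 = (p k).1 → (p j).2 = (p k).2 → j = k) := fun j hj =>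
    ⟨(hheight j hj).1, (hheight j hj).2,
      fun h1 h2 => hinj (mem_Iic.2 hj) (mem_Iic.2 (Nat.zero_le k)) (Prod.ext h1 h2),
      fun h1 h2 => hinj (mem_Iic.2 hj) (mem_Iic.2 le_rfl) (Prod.ext h1 h2)⟩
  refine hasDISRPath_of_far (γ := rayExtension p k) (fun i => ?_) (fun i => ?_)
    (fun i j hij => ?_)
  · rcases hγ i with ⟨hi, e⟩ | ⟨hi, hik, e⟩ | ⟨hi, e⟩ <;> rw [e]
    · exact Or.inl (Or.inl ⟨rfl, by simp only; omega⟩)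
    · exact Or.inl (Or.inr ⟨i.toNat, mem_Iic.2 (by omega), rfl⟩)
    · exact Or.inr ⟨rfl, by simp only; omega⟩
  · rcases hγ i with ⟨hi, e⟩ | ⟨hi, hik, e⟩ | ⟨hi, e⟩ <;>
      rcases hγ (i + 1) with ⟨hi', e'⟩ | ⟨hi', hik', e'⟩ | ⟨hi', e'⟩ <;>
      rw [e, e'] <;> try (exfalso; omega)
    · rw [adjZ2_iff]; omega
    · rw [show (i + 1).toNat = 0 by omega, adjZ2_iff]; omega
    · rw [show (i + 1).toNat = i.toNat + 1 by omega]; exact hp _ (by omega)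
    · rw [show i.toNat = k by omega, adjZ2_iff]; omega
    · rw [adjZ2_iff]; omega
  · rcases hγ i with ⟨hi, e⟩ | ⟨hi, hik, e⟩ | ⟨hi, e⟩ <;>
      rcases hγ j with ⟨hj, e'⟩ | ⟨hj, hjk, e'⟩ | ⟨hj, e'⟩ <;>
      rw [e, e'] <;> try (exfalso; omega)
    · rw [Ne, Prod.ext_iff, adjZ2_iff]; omega
    · have := hpt j.toNat (by omega)
      rw [Ne, Prod.ext_iff, adjZ2_iff]; omega
    · have := hheight k le_rfl
      rw [Ne, Prod.ext_iff, adjZ2_iff]; omega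
    · refine ⟨fun h => ?_, hsr _ _ (by omega) (by omega)⟩
      have := hinj (mem_Iic.2 (show i.toNat ≤ k by omega))
        (mem_Iic.2 (show j.toNat ≤ k by omega)) h
      omega
    · have := hpt i.toNat (by omega)
      rw [Ne, Prod.ext_iff, adjZ2_iff]; omega
    · rw [Ne, Prod.ext_iff, adjZ2_iff]; omega

/-- Going up, each tail passes through every height above its start, so the two tails meet. -/
lemma false_of_tails_in_column {γ : ℤ → Site} (hinj : Function.Injective γ)
    (hstep : ∀ i, |(γ (i + 1)).2 - (γ i).2| ≤ 1) {N c B : ℤ} (hN : 0 < N)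
    (htail : ∀ i, N ≤ |i| → (γ i).1 = c ∧ B ≤ (γ i).2) : False := by
  have hits : ∀ e : ℕ → ℤ, Function.Injective e → (∀ n, N ≤ |e n|) →
      (∀ n, e (n + 1) = e n + 1 ∨ e (n + 1) = e n - 1) →
      ∀ V, (γ (e 0)).2 ≤ V → ∃ n, (γ (e n)).2 = V := by
    intro e he_inj he hes V hV
    refine exists_eq_of_injective_of_bddBelow (g := fun n => (γ (e n)).2)
      (fun a b hab => he_inj (hinj (Prod.ext ?_ hab))) (fun n => ?_) ⟨B, ?_⟩ hV
    · exact (htail _ (he a)).1.trans (htail _ (he b)).1.symm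
    · rcases hes n with h | h <;> simp only [h]
      · exact hstep (e n)
      · simpa [abs_sub_comm] using hstep (e n - 1)
    · rintro _ ⟨n, rfl⟩; exact (htail _ (he n)).2
  set V := max (γ N).2 (γ (-N)).2
  obtain ⟨a, ha⟩ := hits (fun n => N + n) (fun a b h => by simpa using h)
    (fun n => by rw [abs_of_pos (by omega)]; omega) (fun n => Or.inl (by push_cast; ring)) V
    (by simp [V])
  obtain ⟨b, hb⟩ := hits (fun n => -N - n) (fun a b h => by simpa using h)
    (fun n => by rw [abs_of_neg (by omega)]; omega) (fun n => Or.inr (by push_cast; ring)) V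
    (by simp [V])
  have hN' : ∀ n : ℕ, N ≤ |N + n| ∧ N ≤ |-N - n| := fun n => by
    rw [abs_of_pos (by omega), abs_of_neg (by omega)]; omega
  have := hinj (Prod.ext ((htail _ (hN' a).1).1.trans (htail _ (hN' b).2).1.symm)
    (ha.trans hb.symm))
  omega

lemma exists_walk_of_upRay_of_downRay {F : Config} {u v : Site} (huv : v.2 ≤ u.2)
    {γ : ℤ → Site} (hstep : ∀ i, adjZ2 (γ i) (γ (i + 1)))
    (hmem : ∀ i, γ i ∈ F ∪ upRay u ∪ downRay v) {i j : ℤ} (hij : i ≤ j)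
    (hi : γ i ∈ upRay u) (hj : γ j ∈ downRay v) :
    ∃ q m, IsWalk adjZ2 q m ∧ (∀ n ≤ m, q n ∈ F) ∧ u.2 ≤ (q 0).2 ∧ (q m).2 ≤ v.2 := by
  set q : ℕ → Site := fun n => γ (i + n)
  have hq : IsWalk adjZ2 q (j - i).toNat := fun n _ => by
    simpa [q, add_assoc] using hstep (i + n)
  obtain ⟨a, b, hab, hbm, ha, hb, hmid⟩ := exists_crossing_interval
    (P := fun n => q n ∈ upRay u) (Q := fun n => q n ∈ downRay v) (m := (j - i).toNat)
    (by simpa [q] using hi) (by simp only [q, show i + (j - i).toNat = j by omega]; exact hj)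
    (fun n hU hD => by have := hU.2; have := hD.2; omega)
  have hqa := abs_le.1 (abs_snd_sub_le_one_of_adjZ2 (hq a (by omega)))
  have hqb := abs_le.1 (abs_snd_sub_le_one_of_adjZ2 (hq (b - 1) (by omega)))
  rw [Nat.sub_add_cancel (by omega)] at hqb
  have hgap : a + 2 ≤ b := by
    by_contra h
    rw [show a + 1 = b by omega] at hqa
    have := ha.2; have := hb.2; omega
  refine ⟨fun n => q (a + 1 + n), b - a - 2, hq.comp_add (by omega), fun n hn => ?_, ?_, ?_⟩
  · rcases hmem (i + ↑(a + 1 + n)) with (hF | hU) | hD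
    · exact hF
    · exact absurd hU (hmid _ (by omega) (by omega)).1
    · exact absurd hD (hmid _ (by omega) (by omega)).2
  · have := ha.2; simp only [add_zero]; omega
  · have := hb.2; simp only [show a + 1 + (b - a - 2) = b - 1 by omega]; omega

lemma exists_walk_of_hasDISRPath {F : Config} (hF : F.Finite) {u v : Site} (huv : v.2 ≤ u.2)
    (h : HasDISRPath adjZ2 (F ∪ upRay u ∪ downRay v)) :
    ∃ q m, IsWalk adjZ2 q m ∧ (∀ n ≤ m, q n ∈ F) ∧ u.2 ≤ (q 0).2 ∧ (q m).2 ≤ v.2 := by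
  obtain ⟨γ, hinj, hmem, hiff⟩ := h
  have hstep : ∀ i, adjZ2 (γ i) (γ (i + 1)) := fun i => (hiff i (i + 1)).2 (Or.inl rfl)
  have hvert : ∀ i, |(γ (i + 1)).2 - (γ i).2| ≤ 1 := fun i => by
    simpa [abs_sub_comm] using abs_snd_sub_le_one_of_adjZ2 (hstep i)
  obtain ⟨N₀, hN₀⟩ := ((hF.preimage hinj.injOn).image (fun i : ℤ => |i|)).bddAbove
  set N := max N₀ 0 + 1 with hN
  have htail : ∀ i, N ≤ |i| → γ i ∈ upRay u ∪ downRay v := fun i hi => by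
    rcases hmem i with (hF' | hU) | hD
    · have := hN₀ ⟨i, hF', rfl⟩; simp only at this; omega
    · exact Or.inl hU
    · exact Or.inr hD
  have hU : ∃ i, γ i ∈ upRay u := by
    by_contra! hU
    refine false_of_tails_in_column (γ := fun i => ((γ i).1, -(γ i).2)) (N := N) (c := v.1)
      (B := -v.2) (fun a b hab => hinj (by
        simp only [Prod.ext_iff, neg_inj] at hab; exact Prod.ext hab.1 hab.2))
      (fun i => ?_) (by omega) (fun i hi => ?_)
    · rw [← abs_neg]; simpa [neg_add_eq_sub] using hvert i
    · rcases htail i hi with h | h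
      · exact absurd h (hU i)
      · exact ⟨h.1, neg_le_neg h.2.le⟩
  have hD : ∃ j, γ j ∈ downRay v := by
    by_contra! hD
    refine false_of_tails_in_column hinj hvert (N := N) (c := u.1) (B := u.2) (by omega)
      (fun i hi => ?_)
    rcases htail i hi with h | h
    · exact ⟨h.1, h.2.le⟩
    · exact absurd h (hD i)
  obtain ⟨i, hi⟩ := hU
  obtain ⟨j, hj⟩ := hD
  rcases le_total i j with hij | hji
  · exact exists_walk_of_upRay_of_downRay huv hstep hmem hij hi hj
  · refine exists_walk_of_upRay_of_downRay huv (γ := fun i => γ (-i)) (fun i => ?_)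
      (fun i => hmem _) (neg_le_neg hji) (by simpa using hi) (by simpa using hj)
    simpa [neg_add_eq_sub] using symm_of adjZ2 (hstep (-i - 1))

/-! ### Removing the enhancements -/

def HasStripCrossing (W : Config) (M T S : ℝ) : Prop :=
  ∃ q m, IsWalk adjZ2 q m ∧ (∀ n ≤ m, q n ∈ W ∧ |((q n).1 : ℝ)| ≤ M) ∧
    T ≤ (q 0).2 ∧ ((q m).2 : ℝ) ≤ S

lemma HasStripCrossing.mono {W W' : Config} {M M' T S : ℝ} (h : HasStripCrossing W M T S)
    (hW : W ⊆ W') (hM : M ≤ M') : HasStripCrossing W' M' T S :=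
  let ⟨q, m, hq, hqW, h0, hm⟩ := h
  ⟨q, m, hq, fun n hn => ⟨hW (hqW n hn).1, (hqW n hn).2.trans hM⟩, h0, hm⟩

def enhancedBy (φ : Config → Config) (ω : Config) (A : Set Site) : Config :=
  ω ∪ {y | ∃ a ∈ A, y ∈ enhAt φ a ω}

lemma mem_enhAt {φ : Config → Config} {x y : Site} {ω : Config} :
    y ∈ enhAt φ x ω ↔ y - x ∈ φ (shiftConfig x ω) := by
  simp [enhAt, sub_eq_add_neg]

lemma enhAt_subset_enhAt {R₀ : ℝ} {φ : Config → Config} (hφ : IsEnhancement R₀ φ)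
    (hmono : Monotonic φ) {x : Site} {ω ω' : Config}
    (h : ∀ w ∈ ω, w - x ∈ siteBall R₀ → w ∈ ω') : enhAt φ x ω ⊆ enhAt φ x ω' := by
  intro y hy
  rw [mem_enhAt, hφ.2.2 _ (shiftConfig x ω ∩ siteBall R₀) (by rw [inter_assoc, inter_self])]
    at hy
  exact mem_enhAt.2 (hmono _ (shiftConfig x ω') (fun z hz => h _ hz.1 (by simpa using hz.2)) hy)

lemma IsWalk.exists_chordless_highest_lowest {q : ℕ → Site} {m : ℕ} (hq : IsWalk adjZ2 q m) :
    ∃ p k, IsWalk adjZ2 p k ∧ InjOn p (Iic k) ∧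
      (∀ i j, i + 2 ≤ j → j ≤ k → ¬ adjZ2 (p i) (p j)) ∧
      (∀ n ≤ k, ∃ l ≤ m, p n = q l) ∧ ∀ l ≤ m, (p k).2 ≤ (q l).2 ∧ (q l).2 ≤ (p 0).2 := by
  obtain ⟨a, ha, hamax⟩ :=
    (Finset.range (m + 1)).exists_max_image (fun i => (q i).2) ⟨0, by simp⟩
  obtain ⟨c, hc, hcmin⟩ :=
    (Finset.range (m + 1)).exists_min_image (fun i => (q i).2) ⟨0, by simp⟩
  rw [Finset.mem_range] at ha hc
  obtain ⟨p', k', hp', hp'0, hp'k, hp'q⟩ := hq.exists_between (Nat.lt_succ_iff.1 ha)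
    (Nat.lt_succ_iff.1 hc)
  obtain ⟨p, k, hp, hp0, hpk, hpp', hinj, hsr⟩ := hp'.exists_injOn_chordless
  refine ⟨p, k, hp, hinj, hsr, fun n hn => ?_, fun l hl => ?_⟩
  · obtain ⟨l, hl, e⟩ := hpp' n hn
    exact e ▸ hp'q l hl
  · rw [hp0, hp'0, hpk, hp'k]
    exact ⟨hcmin l (by simp; omega), hamax l (by simp; omega)⟩

lemma HasStripCrossing.of_enhancedBy_insert {R₀ : ℝ} {φ : Config → Config}
    (hφ : IsEnhancement R₀ φ) (hmono : Monotonic φ) (hness : ¬ Essential adjZ2 φ)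
    {ω : Config} {A : Set Site} {x : Site} {M T S : ℝ} (hx : |(x.1 : ℝ)| + R₀ ≤ M)
    (h : HasStripCrossing (enhancedBy φ ω (insert x A)) M T S) :
    HasStripCrossing (enhancedBy φ ω A) M T S := by
  obtain ⟨q, m, hq, hqW, hq0, hqm⟩ := h
  obtain ⟨p, k, hp, hinj, hsr, hpq, hheight⟩ := hq.exists_chordless_highest_lowest
  have hpW : ∀ n ≤ k, (p n ∈ enhancedBy φ ω (insert x A) ∧ |((p n).1 : ℝ)| ≤ M) ∧
      (p k).2 ≤ (p n).2 ∧ (p n).2 ≤ (p 0).2 := fun n hn => by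
    obtain ⟨l, hl, e⟩ := hpq n hn
    exact e ▸ ⟨hqW l hl, hheight l hl⟩
  set F : Config := {z ∈ p '' Iic k | z ∈ enhancedBy φ ω A} ∪ {w ∈ ω | w - x ∈ siteBall R₀}
  have hF : F.Finite := (((finite_Iic k).image p).subset fun z hz => hz.1).union
    (((finite_siteBall R₀).image (· + x)).subset fun w hw => ⟨w - x, hw.2, by simp⟩)
  have hcover : upRay (p 0) ∪ p '' Iic k ∪ downRay (p k) ⊆
      (F ∪ upRay (p 0) ∪ downRay (p k)) ∪ enhAt φ x (F ∪ upRay (p 0) ∪ downRay (p k)) := by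
    rintro z ((hz | ⟨n, hn, rfl⟩) | hz)
    · exact Or.inl (Or.inl (Or.inr hz))
    · rcases (hpW n hn).1.1 with hω | ⟨a, rfl | ha, hza⟩
      · exact Or.inl (Or.inl (Or.inl (Or.inl ⟨mem_image_of_mem _ hn, Or.inl hω⟩)))
      · exact Or.inr (enhAt_subset_enhAt hφ hmono
          (fun w hw hwx => Or.inl (Or.inl (Or.inr ⟨hw, hwx⟩))) hza)
      · exact Or.inl (Or.inl (Or.inl (Or.inl ⟨mem_image_of_mem _ hn, Or.inr ⟨a, ha, hza⟩⟩)))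
    · exact Or.inl (Or.inr hz)
  have hDISR := ((hasDISRPath_upRay_union_downRay hp hinj hsr fun n hn => (hpW n hn).2).mono
    hcover).of_enhAt hness
  obtain ⟨q', m', hq', hq'F, h0, hm⟩ :=
    exists_walk_of_hasDISRPath hF ((hpW 0 (Nat.zero_le k)).2.1) hDISR
  refine ⟨q', m', hq', fun n hn => ?_, ?_, ?_⟩
  · rcases hq'F n hn with ⟨⟨l, hl, e⟩, hz⟩ | ⟨hω, hball⟩
    · exact ⟨hz, e ▸ (hpW l hl).1.2⟩
    · exact ⟨Or.inl hω, by linarith [abs_sub_abs_le_abs_sub ((q' n).1 : ℝ) x.1,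
        abs_fst_sub_le_of_sub_mem_siteBall hball]⟩
  · exact hq0.trans (by exact_mod_cast (hheight 0 (Nat.zero_le m)).2.trans h0)
  · exact (show ((q' m').2 : ℝ) ≤ (q m).2 by exact_mod_cast hm.trans (hheight m le_rfl).1).trans
      hqm

lemma HasStripCrossing.of_enhancedBy {R₀ : ℝ} {φ : Config → Config} (hφ : IsEnhancement R₀ φ)
    (hmono : Monotonic φ) (hness : ¬ Essential adjZ2 φ) {ω : Config} {A : Set Site}
    (hA : A.Finite) {M T S : ℝ} (hAM : ∀ a ∈ A, |(a.1 : ℝ)| + R₀ ≤ M)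
    (h : HasStripCrossing (enhancedBy φ ω A) M T S) : HasStripCrossing ω M T S := by
  induction A, hA using Set.Finite.induction_on with
  | empty => exact h.mono (by simp [enhancedBy]) le_rfl
  | insert _ _ ih =>
    exact ih (fun a ha => hAM a (Or.inr ha))
      (h.of_enhancedBy_insert hφ hmono hness (hAM _ (Or.inl rfl)))

lemma HasStripCrossing.exists_finite_of_enhanced {R₀ : ℝ} {φ : Config → Config}
    (hφ : IsEnhancement R₀ φ) {ω : Config} {α : Site → Bool} {M T S : ℝ}
    (h : HasStripCrossing (enhanced φ ω α) M T S) :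
    ∃ A : Set Site, A.Finite ∧ (∀ a ∈ A, |(a.1 : ℝ)| ≤ M + R₀) ∧
      HasStripCrossing (enhancedBy φ ω A) M T S := by
  obtain ⟨q, m, hq, hqW, h0, hm⟩ := h
  have hball : ∀ {n a}, q n ∈ enhAt φ a ω → q n - a ∈ siteBall R₀ := fun hn =>
    hφ.2.1 _ (mem_enhAt.1 hn)
  refine ⟨{a | ∃ n ≤ m, q n ∈ enhAt φ a ω}, ?_, ?_, q, m, hq, fun n hn => ?_, h0, hm⟩
  · refine ((finite_Iic m).biUnion fun n _ => (finite_siteBall R₀).image (q n - ·)).subset ?_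
    rintro a ⟨n, hn, ha⟩
    exact mem_biUnion (mem_Iic.2 hn) ⟨_, hball ha, sub_sub_cancel _ _⟩
  · rintro a ⟨n, hn, ha⟩
    linarith [abs_sub_abs_le_abs_sub (a.1 : ℝ) (q n).1, abs_sub_comm (a.1 : ℝ) (q n).1,
      abs_fst_sub_le_of_sub_mem_siteBall (hball ha), (hqW n hn).2]
  · refine ⟨?_, (hqW n hn).2⟩
    rcases (hqW n hn).1 with hω | ⟨a, -, ha⟩
    exacts [Or.inl hω, Or.inr ⟨a, ⟨n, hn, ha⟩, ha⟩]

/-! ### Crossings of rectangles -/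

lemma snd_mem_Icc_of_mem_seg {u v w : ℝ × ℝ} (hw : w ∈ seg u v) :
    min u.2 v.2 ≤ w.2 ∧ w.2 ≤ max u.2 v.2 := by
  obtain ⟨t, ht0, ht1, rfl⟩ := hw
  simp only [Prod.snd_add, Prod.smul_snd, smul_eq_mul]
  have h1 := mul_le_mul_of_nonneg_left (min_le_left u.2 v.2) (sub_nonneg.2 ht1)
  have h2 := mul_le_mul_of_nonneg_left (min_le_right u.2 v.2) ht0
  have h3 := mul_le_mul_of_nonneg_left (le_max_left u.2 v.2) (sub_nonneg.2 ht1)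
  have h4 := mul_le_mul_of_nonneg_left (le_max_right u.2 v.2) ht0
  constructor <;> nlinarith

lemma seg_inter_nonempty {u v : ℝ × ℝ} {a c : ℝ} (hu : |u.1| ≤ a) (hv : |v.1| ≤ a)
    (hvc : v.2 ≤ c) (hcu : c ≤ u.2) (huv : v.2 < u.2) :
    (seg u v ∩ {w | |w.1| ≤ a ∧ w.2 = c}).Nonempty := by
  set t := (u.2 - c) / (u.2 - v.2)
  have ht0 : 0 ≤ t := div_nonneg (by linarith) (by linarith)
  have ht1 : t ≤ 1 := (div_le_one (by linarith)).2 (by linarith)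
  refine ⟨(1 - t) • u + t • v, ⟨t, ht0, ht1, rfl⟩, ?_, ?_⟩
  · simp only [Prod.fst_add, Prod.smul_fst, smul_eq_mul]
    calc |(1 - t) * u.1 + t * v.1| ≤ (1 - t) * |u.1| + t * |v.1| := by
          refine (abs_add_le _ _).trans_eq ?_
          rw [abs_mul, abs_mul, abs_of_nonneg (by linarith), abs_of_nonneg ht0]
      _ ≤ (1 - t) * a + t * a := by gcongr
      _ = a := by ring
  · simp only [Prod.snd_add, Prod.smul_snd, smul_eq_mul, t]
    field_simp [(sub_pos.2 huv).ne']
    ring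

lemma VertCrossing.hasStripCrossing {W : Config} {δ b h : ℝ} (hδ : 0 < δ)
    (hc : VertCrossing adjZ2 (embedSq δ) W b h) :
    HasStripCrossing W (b / (2 * δ) + 1) (h / (2 * δ)) (-(h / (2 * δ))) := by
  obtain ⟨n, x, hn, hadj, -, hmem, hrect, ⟨w, hw, hwtop⟩, ⟨w', hw', hwbot⟩⟩ := hc
  have hint : ∀ i, 1 ≤ i → i ≤ n → |((x i).1 : ℝ)| ≤ b / (2 * δ) := fun i h1 h2 => by
    obtain ⟨r1, r2, -, -⟩ := hrect i h1 h2
    have : |δ * (x i).1| < b / 2 := abs_lt.2 ⟨r1, r2⟩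
    rw [abs_mul, abs_of_pos hδ] at this
    rw [le_div_iff₀ (by positivity)]; linarith
  refine ⟨x, n + 1, fun i hi => hadj i (by omega), fun i hi => ⟨hmem i hi, ?_⟩, ?_, ?_⟩
  · rcases Nat.eq_zero_or_pos i with rfl | hi0
    · have := abs_fst_sub_le_one_of_adjZ2 (hadj 0 (Nat.zero_le n))
      linarith [abs_sub_abs_le_abs_sub ((x 0).1 : ℝ) (x 1).1, hint 1 le_rfl hn]
    rcases (show i ≤ n + 1 from hi).lt_or_eq with hi' | rfl
    · linarith [hint i hi0 (by omega)]
    · have := abs_fst_sub_le_one_of_adjZ2 (hadj n le_rfl)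
      rw [abs_sub_comm] at this
      linarith [abs_sub_abs_le_abs_sub ((x (n + 1)).1 : ℝ) (x n).1, hint n hn le_rfl]
  · have := (snd_mem_Icc_of_mem_seg hw).2
    have h1 := (hrect 1 le_rfl hn).2.2.2
    simp only [embedSq, hwtop.2] at this h1
    rw [div_le_iff₀ (by positivity)]
    rcases le_max_iff.1 this with h2 | h2 <;> linarith
  · have := (snd_mem_Icc_of_mem_seg hw').1
    have h1 := (hrect n hn le_rfl).2.2.1
    simp only [embedSq, hwbot.2] at this h1
    rw [le_neg, div_le_iff₀ (by positivity)]
    rcases min_le_iff.1 this with h2 | h2 <;> linarith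

lemma HasStripCrossing.vertCrossing {W : Config} {M T δ b h : ℝ} (hδ : 0 < δ)
    (hM : δ * M < b / 2) (hT : h / 2 ≤ δ * T) (hδh : δ < h)
    (hc : HasStripCrossing W M T (-T)) : VertCrossing adjZ2 (embedSq δ) W b h := by
  obtain ⟨q, m, hq, hqW, h0, hm⟩ := hc
  obtain ⟨p, k, hp, hp0, hpk, hpq, hinj, -⟩ := hq.exists_injOn_chordless
  have hpW : ∀ n ≤ k, p n ∈ W ∧ |δ * (p n).1| < b / 2 := fun n hn => by
    obtain ⟨l, hl, e⟩ := hpq n hn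
    rw [e, abs_mul, abs_of_pos hδ]
    exact ⟨(hqW l hl).1, lt_of_le_of_lt (by gcongr; exact (hqW l hl).2) hM⟩
  have hstep : ∀ n < k, |δ * (p (n + 1)).2 - δ * (p n).2| ≤ δ := fun n hn => by
    have := abs_snd_sub_le_one_of_adjZ2 (hp n hn)
    rw [← mul_sub, abs_mul, abs_of_pos hδ, abs_sub_comm]
    exact mul_le_of_le_one_right hδ.le (by exact_mod_cast this)
  obtain ⟨a, c, hac, hck, ha, hc, hmid⟩ := exists_crossing_interval
    (P := fun n => h / 2 ≤ δ * (p n).2) (Q := fun n => δ * (p n).2 ≤ -(h / 2)) (m := k)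
    (by rw [hp0]; nlinarith) (by rw [hpk]; nlinarith) (fun n h1 h2 => by linarith)
  have hmid' : ∀ n, a < n → n < c → -(h / 2) < δ * (p n).2 ∧ δ * (p n).2 < h / 2 :=
    fun n h1 h2 => ⟨lt_of_not_ge (hmid n h1 h2).2, lt_of_not_ge (hmid n h1 h2).1⟩
  have hgap : a + 2 ≤ c := by
    by_contra hlt
    have := abs_le.1 (hstep a (by omega))
    rw [show a + 1 = c by omega] at this
    linarith
  refine ⟨c - a - 1, fun i => p (a + i), by omega, fun i hi => hp _ (by omega),
    fun i hi j hj he => by have := hinj (mem_Iic.2 (by omega)) (mem_Iic.2 (by omega)) he; omega,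
    fun i hi => (hpW _ (by omega)).1, fun i h1 h2 => ?_, ?_, ?_⟩
  · have := abs_lt.1 (hpW (a + i) (by omega)).2
    have := hmid' (a + i) (by omega) (by omega)
    exact ⟨by simp only [embedSq]; linarith, by simp only [embedSq]; linarith,
      by simp only [embedSq]; linarith, by simp only [embedSq]; linarith⟩
  · have := hmid' (a + 1) (by omega) (by omega)
    exact seg_inter_nonempty (hpW a (by omega)).2.le (hpW (a + 1) (by omega)).2.le
      this.2.le ha (by simp only [embedSq, add_zero]; linarith)
  · have := hmid' (a + (c - a - 1)) (by omega) (by omega)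
    dsimp only
    rw [show a + (c - a - 1 + 1) = c by omega]
    exact seg_inter_nonempty (hpW _ (by omega)).2.le (hpW c hck).2.le hc this.1.le
      (by simp only [embedSq]; linarith)

lemma VertCrossing.of_enhanced {R₀ : ℝ} {φ : Config → Config}
    (hφ : IsEnhancement R₀ φ) (hmono : Monotonic φ) (hness : ¬ Essential adjZ2 φ)
    {ω : Config} {α : Site → Bool} {δ b h ε : ℝ} (hδ : 0 < δ) (hδε : δ * (4 * R₀ + 2) < ε)
    (hδh : δ < h - ε) (hc : VertCrossing adjZ2 (embedSq δ) (enhanced φ ω α) b h) :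
    VertCrossing adjZ2 (embedSq δ) ω (b + ε) (h - ε) := by
  obtain ⟨A, hA, hAM, hcA⟩ := (hc.hasStripCrossing hδ).exists_finite_of_enhanced hφ
  have hR₀ := hφ.1
  have hcω : HasStripCrossing ω (b / (2 * δ) + 1 + 2 * R₀) (h / (2 * δ)) (-(h / (2 * δ))) :=
    (hcA.mono subset_rfl (by linarith)).of_enhancedBy hφ hmono hness hA
      fun a ha => by linarith [hAM a ha]
  have hε : 0 < ε := (mul_pos hδ (by linarith)).trans hδε
  have hb : δ * (b / (2 * δ)) = b / 2 := by field_simp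
  have hh : δ * (h / (2 * δ)) = h / 2 := by field_simp
  exact hcω.vertCrossing hδ (by nlinarith) (by linarith) (by linarith)

lemma VertCrossing.mono {adj : Site → Site → Prop} {emb : Site → ℝ × ℝ} {ω ω' : Config}
    {b h : ℝ} (hc : VertCrossing adj emb ω b h) (hω : ω ⊆ ω') : VertCrossing adj emb ω' b h :=
  let ⟨n, x, hn, h1, h2, h3, h4, h5, h6⟩ := hc
  ⟨n, x, hn, h1, h2, fun i hi => hω (h3 i hi), h4, h5, h6⟩

/-! ### Crossing probabilities -/

section Probability

variable {adj : Site → Site → Prop} {φ : Config → Config} {emb : Site → ℝ × ℝ}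
  {μ ν : Measure (Site → Bool)} [IsProbabilityMeasure μ] [IsProbabilityMeasure ν]

lemma crossProb_le_crossProbEnh (b h : ℝ) :
    crossProb adj emb μ b h ≤ crossProbEnh adj φ emb μ ν b h := by
  refine ENNReal.toReal_mono (measure_ne_top _ _) ?_
  calc μ {η | VertCrossing adj emb (toConfig η) b h}
      = (μ.prod ν) ({η | VertCrossing adj emb (toConfig η) b h} ×ˢ univ) := by
        rw [Measure.prod_prod, measure_univ, mul_one]
    _ ≤ _ := measure_mono fun ηα hηα => hηα.1.mono subset_union_left

lemma crossProbEnh_le_crossProb {b h b' h' : ℝ}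
    (hpath : ∀ ω α, VertCrossing adj emb (enhanced φ ω α) b h → VertCrossing adj emb ω b' h') :
    crossProbEnh adj φ emb μ ν b h ≤ crossProb adj emb μ b' h' := by
  refine ENNReal.toReal_mono (measure_ne_top _ _) ?_
  calc (μ.prod ν) {ηα | VertCrossing adj emb (enhanced φ (toConfig ηα.1) ηα.2) b h}
      ≤ (μ.prod ν) ({η | VertCrossing adj emb (toConfig η) b' h'} ×ˢ univ) :=
        measure_mono fun ηα hηα => ⟨hpath _ _ hηα, mem_univ _⟩
    _ = _ := by rw [Measure.prod_prod, measure_univ, mul_one]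

lemma eventually_crossProbEnh_le_crossProb {R₀ : ℝ} (hφ : IsEnhancement R₀ φ)
    (hmono : Monotonic φ) (hness : ¬ Essential adjZ2 φ) {b h ε : ℝ} (hε : 0 < ε) (hεh : ε < h) :
    ∀ᶠ δ in 𝓝[>] 0, crossProbEnh adjZ2 φ (embedSq δ) μ ν b h ≤
      crossProb adjZ2 (embedSq δ) μ (b + ε) (h - ε) := by
  have hR₀ := hφ.1
  filter_upwards [Ioo_mem_nhdsGT (lt_min (div_pos hε (by linarith : 0 < 4 * R₀ + 2))
    (sub_pos.2 hεh))] with δ ⟨hδ, hδε⟩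
  refine crossProbEnh_le_crossProb fun ω α hc => hc.of_enhanced hφ hmono hness hδ ?_
    (hδε.trans_le (min_le_right _ _))
  exact (lt_div_iff₀ (by linarith)).1 (hδε.trans_le (min_le_left _ _))

end Probability

lemma pcOf_mem_Icc (adj : Site → Site → Prop) (P : ℝ → Measure (Site → Bool)) :
    pcOf adj P ∈ Icc (0 : ℝ) 1 := by
  rcases eq_empty_or_nonempty {p | p ∈ Icc (0 : ℝ) 1 ∧ theta adj (P p) = 0} with hS | ⟨p, hp⟩
  · rw [pcOf, hS, Real.sSup_empty]
    exact ⟨le_rfl, zero_le_one⟩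
  · have hbdd : BddAbove {p | p ∈ Icc (0 : ℝ) 1 ∧ theta adj (P p) = 0} := ⟨1, fun p hp => hp.1.2⟩
    exact ⟨hp.1.1.trans (le_csSup hbdd hp), csSup_le ⟨p, hp⟩ fun r hr => hr.1.2⟩

lemma tendsto_of_le_of_le_approx {α β γ : Type*} [TopologicalSpace γ] [LinearOrder γ]
    [OrderTopology γ] {l : Filter α} {l' : Filter β} [l'.NeBot] {f g : α → γ}
    {u : β → α → γ} {c : β → γ} {L : γ} (hf : Tendsto f l (𝓝 L)) (hfg : ∀ᶠ x in l, f x ≤ g x)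
    (hc : Tendsto c l' (𝓝 L))
    (hu : ∀ᶠ ρ in l', (∀ᶠ x in l, g x ≤ u ρ x) ∧ Tendsto (u ρ) l (𝓝 (c ρ))) :
    Tendsto g l (𝓝 L) := by
  refine tendsto_order.2 ⟨fun a ha => ?_, fun a ha => ?_⟩
  · filter_upwards [(tendsto_order.1 hf).1 a ha, hfg] with x h1 h2 using h1.trans_le h2
  · obtain ⟨ρ, hρ, hgu, huc⟩ := ((tendsto_order.1 hc).2 a ha |>.and hu).exists
    filter_upwards [hgu, (tendsto_order.1 huc).2 a hρ] with x h1 h2 using h1.trans_lt h2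

lemma tendsto_comp_perturbed_ratio {F : ℝ → ℝ} (hF : ContinuousOn F (Ioi 0)) {b h : ℝ}
    (hb : 0 < b) (hh : 0 < h) :
    Tendsto (fun ρ => F ((b + ρ) / (h - ρ))) (𝓝 0) (𝓝 (F (b / h))) := by
  have hratio : Tendsto (fun ρ : ℝ => (b + ρ) / (h - ρ)) (𝓝 0) (𝓝 (b / h)) := by
    have : ContinuousAt (fun ρ : ℝ => (b + ρ) / (h - ρ)) 0 :=
      (continuousAt_const.add continuousAt_id).div (continuousAt_const.sub continuousAt_id)
        (by simpa using hh.ne')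
    simpa using this.tendsto
  exact ((hF.continuousAt (Ioi_mem_nhds (div_pos hb hh))).tendsto).comp hratio

/-- for a monotonic nonessential enhancement of site percolation on
`ℤ²` and `s ∈ [0,1]`, if the crossing probabilities of independent critical site
percolation converge as `δ → 0` to a continuous function `F` of the aspect ratio,
then the crossing probabilities of the enhanced process have the same scaling limit. -/
theorem crossing_probabilities_unchanged_square
    (P : ℝ → Measure (Site → Bool))
    (hP : ∀ p ∈ Icc (0:ℝ) 1, IsBernoulli p (P p))
    (R₀ : ℝ) (φ : Config → Config) (hφ : IsEnhancement R₀ φ)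
    (hmono : Monotonic φ) (hness : ¬ Essential adjZ2 φ)
    (s : ℝ) (hs : s ∈ Icc (0:ℝ) 1)
    (F : ℝ → ℝ) (hF : ContinuousOn F (Ioi 0))
    (hconv : ∀ b h : ℝ, 0 < b → 0 < h →
      Tendsto (fun δ => crossProb adjZ2 (embedSq δ) (P (pcOf adjZ2 P)) b h)
        (𝓝[>] 0) (𝓝 (F (b / h)))) :
    ∀ b h : ℝ, 0 < b → 0 < h →
      Tendsto (fun δ => crossProbEnh adjZ2 φ (embedSq δ) (P (pcOf adjZ2 P)) (P s) b h)
        (𝓝[>] 0) (𝓝 (F (b / h))) := by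
  intro b h hb hh
  have := (hP _ (pcOf_mem_Icc adjZ2 P)).1
  have := (hP s hs).1
  refine tendsto_of_le_of_le_approx (l' := 𝓝[>] (0 : ℝ))
    (u := fun ρ δ => crossProb adjZ2 (embedSq δ) (P (pcOf adjZ2 P)) (b + ρ) (h - ρ))
    (hconv b h hb hh)
    (Eventually.of_forall fun δ => crossProb_le_crossProbEnh b h)
    ((tendsto_comp_perturbed_ratio hF hb hh).mono_left nhdsWithin_le_nhds) ?_
  filter_upwards [Ioo_mem_nhdsGT hh] with ρ ⟨hρ, hρh⟩
  exact ⟨eventually_crossProbEnh_le_crossProb hφ hmono hness hρ hρh,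
    hconv _ _ (by linarith) (by linarith)⟩

end PercEnh
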